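/- Let G be a finite simple graph and A a critical independent set of G. Then A = ker(G) if and only if for each v ∈ A there exists a matching from N(A) into A \ {v}, i.e., an injective function f : N(A) → A \ {v} such that f(u) is adjacent to u for every u ∈ N(A). -/

import Mathlib

/-!
If `A = ker G`, Hall's condition for matching `N(A)` into `A \ {v}` holds: for `Y ⊆ N(A)`,
deleting from `A` its neighbours of `Y` leaves an independent set of difference at least
`d(A) + |Y| - |A ∩ N(Y)|`, and strictly less than `d(A)` when `v ∈ ker G` is deleted.

Conversely, a matching of `N(A)` into `A` makes `A ∩ B` critical for every critical `B`
(supermodularity of `d`, applied to `A` and `B \ N(A)`), and a matching of `N(A)` into `A \ {v}`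
shows that `d(C) < d(A)` for every `C ⊆ A` missing `v`; so `v` lies in every critical `B`.
-/

open Finset

namespace CritGraph

variable {V : Type*} [Fintype V] [DecidableEq V]

/-- The neighborhood of a set of vertices `X`:
all vertices having at least one neighbor in `X`. -/
def nbhd (G : SimpleGraph V) [DecidableRel G.Adj] (X : Finset V) : Finset V :=
  univ.filter fun v => ∃ x ∈ X, G.Adj v x

/-- The difference `d(X) = |X| - |N(X)|` of a set of vertices `X`. -/
def diff (G : SimpleGraph V) [DecidableRel G.Adj] (X : Finset V) : ℤ :=
  (X.card : ℤ) - ((nbhd G X).card : ℤ)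

/-- A set of vertices is independent if no two of its vertices are adjacent. -/
def IsIndep (G : SimpleGraph V) (S : Finset V) : Prop :=
  ∀ u ∈ S, ∀ v ∈ S, ¬ G.Adj u v

instance (G : SimpleGraph V) [DecidableRel G.Adj] : DecidablePred (IsIndep G) := fun S =>
  inferInstanceAs (Decidable (∀ u ∈ S, ∀ v ∈ S, ¬ G.Adj u v))

/-- The critical difference `d_c(G) = max {d(X) : X ⊆ V}`. -/
def dC (G : SimpleGraph V) [DecidableRel G.Adj] : ℤ :=
  (univ : Finset V).powerset.sup' (Finset.powerset_nonempty _) (diff G)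

/-- The critical independence difference `id_c(G) = max {d(I) : I independent}`. -/
def idC (G : SimpleGraph V) [DecidableRel G.Adj] : ℤ :=
  ((univ : Finset V).powerset.filter (IsIndep G)).sup'
    ⟨∅, by simp [IsIndep]⟩ (diff G)

/-- `A` is a critical independent set: `A` is independent and
`d(A) = max {d(I) : I independent}`. -/
def IsCritIndep (G : SimpleGraph V) [DecidableRel G.Adj] (A : Finset V) : Prop :=
  IsIndep G A ∧ ∀ I : Finset V, IsIndep G I → diff G I ≤ diff G A

instance (G : SimpleGraph V) [DecidableRel G.Adj] : DecidablePred (IsCritIndep G) := fun A =>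
  inferInstanceAs (Decidable (IsIndep G A ∧ ∀ I : Finset V, IsIndep G I → diff G I ≤ diff G A))

/-- `ker(G)`: the intersection of all critical independent sets of `G`. -/
def kerG (G : SimpleGraph V) [DecidableRel G.Adj] : Finset V :=
  univ.filter fun v => ∀ A : Finset V, IsCritIndep G A → v ∈ A

/-- `G - v`: the induced subgraph of `G` on `V \ {v}`. -/
def deleteVert (G : SimpleGraph V) (v : V) : SimpleGraph {u : V // u ≠ v} :=
  G.comap Subtype.val

instance (G : SimpleGraph V) (v : V) [DecidableRel G.Adj] :
    DecidableRel (deleteVert G v).Adj := fun a b =>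
  inferInstanceAs (Decidable (G.Adj a.val b.val))

/-- `S` is an inclusion-minimal independent set with positive difference. -/
def MinPosIndep (G : SimpleGraph V) [DecidableRel G.Adj] (S : Finset V) : Prop :=
  IsIndep G S ∧ 0 < diff G S ∧ ∀ S' ⊂ S, ¬ (IsIndep G S' ∧ 0 < diff G S')

/-- `S` is a maximum independent set. -/
def IsMaxIndep (G : SimpleGraph V) (S : Finset V) : Prop :=
  IsIndep G S ∧ ∀ I : Finset V, IsIndep G I → I.card ≤ S.card

instance (G : SimpleGraph V) [DecidableRel G.Adj] : DecidablePred (IsMaxIndep G) := fun S =>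
  inferInstanceAs (Decidable (IsIndep G S ∧ ∀ I : Finset V, IsIndep G I → I.card ≤ S.card))

/-- `core(G)`: the intersection of all maximum independent sets of `G`. -/
def coreG (G : SimpleGraph V) [DecidableRel G.Adj] : Finset V :=
  univ.filter fun v => ∀ A : Finset V, IsMaxIndep G A → v ∈ A

end CritGraph

namespace CritGraph

section

variable {V : Type*} {G : SimpleGraph V} {A B S T : Finset V}

def HasMatching (G : SimpleGraph V) (B S : Finset V) : Prop :=
  ∃ f : V → V, Set.InjOn f B ∧ ∀ u ∈ B, f u ∈ S ∧ G.Adj u (f u)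

lemma HasMatching.mono_right (hM : HasMatching G B S) (h : S ⊆ T) : HasMatching G B T :=
  have ⟨f, hinj, hf⟩ := hM
  ⟨f, hinj, fun u hu => ⟨h (hf u hu).1, (hf u hu).2⟩⟩

lemma IsIndep.mono (hA : IsIndep G A) (h : B ⊆ A) : IsIndep G B := fun u hu w hw =>
  hA u (h hu) w (h hw)

end

variable {V : Type*} [Fintype V] {G : SimpleGraph V} [DecidableRel G.Adj]
  {A B X Y : Finset V} {v : V}

lemma mem_nbhd : v ∈ nbhd G X ↔ ∃ x ∈ X, G.Adj v x := by
  simp [nbhd]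

lemma nbhd_mono (h : X ⊆ Y) : nbhd G X ⊆ nbhd G Y := fun _ hw =>
  have ⟨x, hx, hadj⟩ := mem_nbhd.1 hw
  mem_nbhd.2 ⟨x, h hx, hadj⟩

lemma IsIndep.disjoint_nbhd (hA : IsIndep G A) : Disjoint A (nbhd G A) :=
  disjoint_left.2 fun a ha hn =>
    have ⟨b, hb, hadj⟩ := mem_nbhd.1 hn
    hA a ha b hb hadj

lemma IsCritIndep.diff_eq (hA : IsCritIndep G A) (hB : IsCritIndep G B) :
    diff G A = diff G B :=
  le_antisymm (hB.2 A hA.1) (hA.2 B hB.1)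

lemma IsCritIndep.of_diff_le (hA : IsCritIndep G A) (hB : IsIndep G B)
    (h : diff G A ≤ diff G B) : IsCritIndep G B :=
  ⟨hB, fun I hI => (hA.2 I hI).trans h⟩

variable [DecidableEq V] {C S : Finset V}

lemma nbhd_union (X Y : Finset V) : nbhd G (X ∪ Y) = nbhd G X ∪ nbhd G Y := by
  ext w
  simp only [mem_nbhd, mem_union, or_and_right, exists_or]

lemma IsIndep.union (hX : IsIndep G X) (hY : IsIndep G Y) (hXY : Disjoint Y (nbhd G X)) :
    IsIndep G (X ∪ Y) := by
  have hcross : ∀ x ∈ X, ∀ y ∈ Y, ¬ G.Adj x y := fun x hx y hy hadj =>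
    disjoint_left.1 hXY hy (mem_nbhd.2 ⟨x, hx, hadj.symm⟩)
  intro u hu w hw
  rcases mem_union.1 hu with hu | hu <;> rcases mem_union.1 hw with hw | hw
  · exact hX u hu w hw
  · exact hcross u hu w hw
  · exact fun hadj => hcross w hw u hu hadj.symm
  · exact hY u hu w hw

lemma mem_kerG : v ∈ kerG G ↔ ∀ A, IsCritIndep G A → v ∈ A := by
  simp [kerG]

lemma IsCritIndep.kerG_subset (hA : IsCritIndep G A) : kerG G ⊆ A := fun _ hv =>
  mem_kerG.1 hv A hA

lemma diff_add_diff_le_diff_union_add_diff_inter (X Y : Finset V) :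
    diff G X + diff G Y ≤ diff G (X ∪ Y) + diff G (X ∩ Y) := by
  have hN : #(nbhd G (X ∩ Y)) ≤ #(nbhd G X ∩ nbhd G Y) :=
    card_le_card (subset_inter (nbhd_mono inter_subset_left) (nbhd_mono inter_subset_right))
  have hXY := card_union_add_card_inter X Y
  have hNXY := card_union_add_card_inter (nbhd G X) (nbhd G Y)
  rw [← nbhd_union] at hNXY
  simp only [diff]
  omega

lemma hasMatching_of_forall_card_le (hall : ∀ Y ⊆ B, #Y ≤ #(S ∩ nbhd G Y)) :
    HasMatching G B S := by
  let t : B → Finset V := fun u => S.filter (G.Adj u)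
  have hall' : ∀ s : Finset B, #s ≤ #(s.biUnion t) := by
    intro s
    calc #s = #(s.map (Function.Embedding.subtype _)) := (card_map _).symm
      _ ≤ #(S ∩ nbhd G (s.map (Function.Embedding.subtype _))) :=
        hall _ fun _ hx => by
          obtain ⟨u, -, rfl⟩ := mem_map.1 hx
          exact u.2
      _ ≤ #(s.biUnion t) := card_le_card fun a ha => by
          obtain ⟨haS, hn⟩ := mem_inter.1 ha
          obtain ⟨x, hx, hadj⟩ := mem_nbhd.1 hn
          obtain ⟨u, hu, rfl⟩ := mem_map.1 hx
          exact mem_biUnion.2 ⟨u, hu, mem_filter.2 ⟨haS, hadj.symm⟩⟩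
  obtain ⟨f, hinj, hf⟩ := (all_card_le_biUnion_card_iff_exists_injective t).1 hall'
  refine ⟨fun x => if h : x ∈ B then f ⟨x, h⟩ else x, fun x hx y hy hxy => ?_, fun u hu => ?_⟩
  · simp only [mem_coe] at hx hy
    simp only [dif_pos hx, dif_pos hy] at hxy
    exact Subtype.ext_iff.1 (hinj hxy)
  · simpa only [dif_pos hu] using mem_filter.1 (hf ⟨u, hu⟩)

lemma diff_add_card_le_diff_sdiff_nbhd_add_card (hY : Y ⊆ nbhd G A) :
    diff G A + #Y ≤ diff G (A \ nbhd G Y) + #(A ∩ nbhd G Y) := by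
  have hN : nbhd G (A \ nbhd G Y) ⊆ nbhd G A \ Y := fun w hw => by
    obtain ⟨a, ha, hadj⟩ := mem_nbhd.1 hw
    obtain ⟨haA, haY⟩ := mem_sdiff.1 ha
    exact mem_sdiff.2 ⟨mem_nbhd.2 ⟨a, haA, hadj⟩, fun hwY => haY (mem_nbhd.2 ⟨w, hwY, hadj.symm⟩)⟩
  have h1 := card_le_card hN
  rw [card_sdiff_of_subset hY] at h1
  have h2 := card_le_card hY
  have h3 := card_sdiff_add_card_inter A (nbhd G Y)
  simp only [diff]
  omega

lemma IsCritIndep.card_le_card_sdiff_singleton_inter_nbhd (hA : IsCritIndep G A)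
    (hv : v ∈ kerG G) (hY : Y ⊆ nbhd G A) : #Y ≤ #((A \ {v}) ∩ nbhd G Y) := by
  have hkey := diff_add_card_le_diff_sdiff_nbhd_add_card hY
  have hindep : IsIndep G (A \ nbhd G Y) := hA.1.mono sdiff_subset
  have hle : diff G (A \ nbhd G Y) ≤ diff G A := hA.2 _ hindep
  rw [sdiff_singleton_eq_erase, erase_inter]
  by_cases hvY : v ∈ A ∩ nbhd G Y
  · -- `A \ N(Y)` misses `v ∈ ker G`, so it cannot be critical
    have hlt : diff G (A \ nbhd G Y) < diff G A := lt_of_not_ge fun hge =>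
      (mem_sdiff.1 (mem_kerG.1 hv _ (hA.of_diff_le hindep hge))).2 (mem_inter.1 hvY).2
    rw [card_erase_of_mem hvY]
    omega
  · rw [erase_eq_of_notMem hvY]
    omega

lemma IsCritIndep.hasMatching_sdiff_singleton (hA : IsCritIndep G A) (hv : v ∈ kerG G) :
    HasMatching G (nbhd G A) (A \ {v}) :=
  hasMatching_of_forall_card_le fun _ hY => hA.card_le_card_sdiff_singleton_inter_nbhd hv hY

lemma HasMatching.diff_le_diff_sdiff_nbhd (hM : HasMatching G (nbhd G A) A) (B : Finset V) :
    diff G B ≤ diff G (B \ nbhd G A) := by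
  obtain ⟨f, hinj, hf⟩ := hM
  have hmaps : Set.MapsTo f ↑(B ∩ nbhd G A) ↑(nbhd G B \ nbhd G (B \ nbhd G A)) :=
    fun u hu => by
      obtain ⟨huB, huA⟩ := mem_inter.1 hu
      obtain ⟨hfA, hadj⟩ := hf u huA
      refine mem_sdiff.2 ⟨mem_nbhd.2 ⟨u, huB, hadj.symm⟩, fun hn => ?_⟩
      obtain ⟨b, hb, hadjb⟩ := mem_nbhd.1 hn
      exact (mem_sdiff.1 hb).2 (mem_nbhd.2 ⟨f u, hfA, hadjb.symm⟩)
  have h1 := card_le_card_of_injOn f hmaps (hinj.mono fun u hu => (mem_inter.1 hu).2)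
  rw [card_sdiff_of_subset (nbhd_mono sdiff_subset)] at h1
  have h2 := card_le_card (nbhd_mono (G := G) (sdiff_subset : B \ nbhd G A ⊆ B))
  have h3 := card_sdiff_add_card_inter B (nbhd G A)
  simp only [diff]
  omega

lemma IsCritIndep.inter_of_hasMatching (hA : IsCritIndep G A) (hB : IsCritIndep G B)
    (hM : HasMatching G (nbhd G A) A) : IsCritIndep G (A ∩ B) := by
  have hB' : IsIndep G (B \ nbhd G A) := hB.1.mono sdiff_subset
  have hinter : A ∩ (B \ nbhd G A) = A ∩ B := by
    rw [← inter_sdiff_assoc,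
      sdiff_eq_self_of_disjoint (hA.1.disjoint_nbhd.mono_left inter_subset_left)]
  have hsuper := diff_add_diff_le_diff_union_add_diff_inter (G := G) A (B \ nbhd G A)
  have hunion := hA.2 _ (hA.1.union hB' disjoint_sdiff_self_left)
  have hB'ge := hM.diff_le_diff_sdiff_nbhd B
  rw [hinter] at hsuper
  exact hA.of_diff_le (hA.1.mono inter_subset_left) (by linarith [hA.diff_eq hB])

lemma HasMatching.diff_lt (hM : HasMatching G (nbhd G A) (A \ {v})) (hCA : C ⊆ A)
    (hvA : v ∈ A) (hvC : v ∉ C) : diff G C < diff G A := by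
  obtain ⟨f, hinj, hf⟩ := hM
  have hmaps : Set.MapsTo f ↑(nbhd G A \ nbhd G C) ↑((A \ C).erase v) := fun u hu => by
    obtain ⟨huA, huC⟩ := mem_sdiff.1 hu
    obtain ⟨hfv, hadj⟩ := hf u huA
    obtain ⟨hfA, hfne⟩ := mem_sdiff.1 hfv
    exact mem_erase.2 ⟨by simpa using hfne,
      mem_sdiff.2 ⟨hfA, fun hfC => huC (mem_nbhd.2 ⟨f u, hfC, hadj⟩)⟩⟩
  have h1 := card_le_card_of_injOn f hmaps (hinj.mono fun u hu => (mem_sdiff.1 hu).1)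
  rw [card_erase_of_mem (mem_sdiff.2 ⟨hvA, hvC⟩), card_sdiff_of_subset hCA] at h1
  have h2 := le_card_sdiff (nbhd G C) (nbhd G A)
  have h3 : #C < #A := card_lt_card ⟨hCA, fun h => hvC (h hvA)⟩
  simp only [diff]
  omega

/-- A critical independent set `A` equals `ker(G)` iff for each `v ∈ A` there is
a matching from `N(A)` into `A \ {v}`. -/
theorem eq_kerG_iff_matching_avoiding_each_vertex (G : SimpleGraph V) [DecidableRel G.Adj]
    (A : Finset V) (hA : IsCritIndep G A) :
    A = kerG G ↔
      ∀ v ∈ A, ∃ f : V → V, Set.InjOn f ↑(nbhd G A) ∧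
        ∀ u ∈ nbhd G A, f u ∈ A \ {v} ∧ G.Adj u (f u) := by
  change A = kerG G ↔ ∀ v ∈ A, HasMatching G (nbhd G A) (A \ {v})
  constructor
  · rintro rfl v hv
    exact hA.hasMatching_sdiff_singleton hv
  · intro hM
    refine Subset.antisymm (fun v hv => mem_kerG.2 fun B hB => ?_) hA.kerG_subset
    by_contra hvB
    have hC := hA.inter_of_hasMatching hB ((hM v hv).mono_right sdiff_subset)
    exact ((hM v hv).diff_lt inter_subset_left hv fun h => hvB (mem_inter.1 h).2).not_ge
      (hC.2 A hA.1)

end CritGraph
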